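/- Group-blindness of associative aggregation: if A is a symmetric associative aggregation function on multisets over E, X is a finite multiset over E, and g : E → K is any grouping function, then aggregating the per-group aggregates A(A(X|g=k₁),...,A(X|g=k_m)) equals A(X), independent of the choice of g. -/

import Mathlib

/-- Group blindness: aggregating per-group aggregates gives the total aggregate,
independently of the grouping function. -/
theorem group_blindness {E K : Type*} [DecidableEq E] [DecidableEq K]
    (A : Multiset E → E)
    (hsingle : ∀ x : E, A {x} = x)
    (hassoc : ∀ (X Y : Multiset E), Y ≤ X → A X = A ((X - Y) + {A Y}))
    (X : Multiset E) (g : E → K) :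
    A (((X.map g).toFinset.val).map (fun k => A (X.filter (fun e => g e = k)))) = A X := by
  have hcomb : ∀ (Y Z : Multiset E), A (Y + Z) = A ({A Y} + Z) := by
    intro Y Z
    have h1 := hassoc (Y + Z) Y (Multiset.le_add_right _ _)
    have h2 := hassoc ({A Y} + Z) ({A Y} : Multiset E) (Multiset.le_add_right _ _)
    simp only [add_tsub_cancel_left, hsingle] at *
    rw [h1, h2]
  -- main claim by strong induction on the key set
  have main : ∀ (S : Finset K) (X : Multiset E), X ≠ 0 → (X.map g).toFinset = S →
      A (S.val.map (fun k => A (X.filter (fun e => g e = k)))) = A X := by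
    intro S
    induction S using Finset.strongInduction with
    | _ S ih =>
      intro X hX hS
      obtain ⟨x, hx⟩ := Multiset.exists_mem_of_ne_zero hX
      set k := g x with hk
      have hkS : k ∈ S := by
        rw [← hS]; simp [Multiset.mem_toFinset]; exact ⟨x, hx, rfl⟩
      set X₁ := X.filter (fun e => g e = k) with hX₁
      set X₂ := X.filter (fun e => ¬ g e = k) with hX₂
      have hsplit : X₁ + X₂ = X := Multiset.filter_add_not _ _
      have hX₁ne : X₁ ≠ 0 := by
        intro h
        have : x ∈ X₁ := by rw [hX₁]; simp [hx, hk]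
        rw [h] at this; simp at this
      -- rewrite S.val as k ::ₘ (S.erase k).val
      have hSval : S.val = k ::ₘ (S.erase k).val := by
        conv_lhs => rw [← Finset.insert_erase hkS]
        exact Finset.insert_val_of_notMem (Finset.notMem_erase _ _)
      -- filters over other keys agree between X and X₂
      have hfilt : ∀ k' ∈ S.erase k, X.filter (fun e => g e = k') = X₂.filter (fun e => g e = k') := by
        intro k' hk'
        have hne : k' ≠ k := Finset.ne_of_mem_erase hk'
        rw [hX₂, Multiset.filter_filter]
        apply Multiset.filter_congr
        intro e _
        constructor
        · intro h; exact ⟨h, by rw [h]; exact hne⟩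
        · intro h; exact h.1
      have hmapeq : (S.erase k).val.map (fun k' => A (X.filter (fun e => g e = k'))) =
          (S.erase k).val.map (fun k' => A (X₂.filter (fun e => g e = k'))) := by
        apply Multiset.map_congr rfl
        intro k' hk'
        rw [hfilt k' hk']
      rw [hSval, Multiset.map_cons, ← Multiset.singleton_add, hmapeq]
      by_cases hX₂ne : X₂ = 0
      · have hX1X : X₁ = X := by rw [← hsplit, hX₂ne, add_zero]
        have hSerase : S.erase k = ∅ := by
          ext k'
          simp only [Finset.mem_erase, Finset.notMem_empty, iff_false, not_and]
          intro hne hks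
          have : k' ∈ (X.map g).toFinset := hS ▸ hks
          rw [Multiset.mem_toFinset, Multiset.mem_map] at this
          obtain ⟨e, he, hge⟩ := this
          have : e ∈ X₂ := by rw [hX₂]; simp [he, hge, hne]
          rw [hX₂ne] at this; simp at this
        rw [hSerase]
        simp only [Multiset.map_zero, Finset.empty_val, add_zero, hsingle]
        exact congrArg A hX1X
      · -- image of X₂ is S.erase k
        have himg : (X₂.map g).toFinset = S.erase k := by
          ext k'
          simp only [Multiset.mem_toFinset, Multiset.mem_map, Finset.mem_erase]
          constructor
          · rintro ⟨e, he, rfl⟩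
            rw [hX₂, Multiset.mem_filter] at he
            refine ⟨he.2, ?_⟩
            rw [← hS, Multiset.mem_toFinset, Multiset.mem_map]
            exact ⟨e, he.1, rfl⟩
          · rintro ⟨hne, hks⟩
            have : k' ∈ (X.map g).toFinset := hS ▸ hks
            rw [Multiset.mem_toFinset, Multiset.mem_map] at this
            obtain ⟨e, he, hge⟩ := this
            exact ⟨e, by rw [hX₂, Multiset.mem_filter]; exact ⟨he, by rw [hge]; exact hne⟩, hge⟩
        have hss : S.erase k ⊂ S := Finset.erase_ssubset hkS
        have hIH := ih (S.erase k) hss X₂ hX₂ne himg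
        -- goal: A ({A X₁} + map ...) = A X
        calc A ({A X₁} + (S.erase k).val.map (fun k' => A (X₂.filter (fun e => g e = k'))))
            = A ((S.erase k).val.map (fun k' => A (X₂.filter (fun e => g e = k'))) + {A X₁}) := by
              rw [add_comm]
          _ = A ({A ((S.erase k).val.map (fun k' => A (X₂.filter (fun e => g e = k'))))} + {A X₁}) := hcomb _ _
          _ = A ({A X₂} + {A X₁}) := by rw [hIH]
          _ = A (X₂ + {A X₁}) := (hcomb _ _).symm
          _ = A ({A X₁} + X₂) := by rw [add_comm]
          _ = A (X₁ + X₂) := (hcomb _ _).symm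
          _ = A X := by rw [hsplit]
  by_cases hX : X = 0
  · subst hX
    simp
  · exact main _ X hX rfl
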